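/- Assume ∇F is Lipschitz with constant L and ‖∇F(w)‖₁ ≤ √d·L for all w. For the ZIM update ḡ with parameters n, r, c, we have ⟨∇F(w), E[ḡ(w, ξ)]⟩ ≥ r·(n/(√d·L + c·d))·‖∇F(w)‖₂². That is, Assumption (dot-bound) holds with α = r and μ = n/(√d·L + c·d). -/
import Mathlib


open MeasureTheory

lemma mul_sign_eq_abs (x : ℝ) : x * Real.sign x = |x| := by
  rcases lt_trichotomy x 0 with h | h | h
  · rw [Real.sign_of_neg h, abs_of_neg h]; ring
  · simp [h]
  · rw [Real.sign_of_pos h, abs_of_pos h]; ring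

theorem stmt_8 {d : ℕ} (F : EuclideanSpace ℝ (Fin d) → ℝ) (hF : Differentiable ℝ F)
    (L : ℝ) (hL : 0 < L)
    (hLip : ∀ w wbar : EuclideanSpace ℝ (Fin d),
      ‖gradient F w - gradient F wbar‖ ≤ L * ‖w - wbar‖)
    (h1 : ∀ w : EuclideanSpace ℝ (Fin d), (∑ i, |gradient F w i|) ≤ Real.sqrt d * L)
    (w : EuclideanSpace ℝ (Fin d)) (n : ℕ) (r c : ℝ) (hr0 : 0 ≤ r) (hr1 : r ≤ 1)
    (hc : 0 < c)
    (Eg : Fin d → ℝ)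
    (hEg : ∀ i, Eg i = (n * r / ((∑ j, |gradient F w j|) + c * d))
        * (gradient F w i + c * Real.sign (gradient F w i))) :
    (∑ i, gradient F w i * Eg i)
      ≥ r * ((n : ℝ) / (Real.sqrt d * L + c * d)) * ∑ i, (gradient F w i) ^ 2 := by
  set g := gradient F w with hg
  set S : ℝ := ∑ j, |g j| with hS
  set T : ℝ := ∑ i, (g i) ^ 2 with hT
  set D : ℝ := Real.sqrt d * L + c * d with hD
  set K : ℝ := (n : ℝ) * r / (S + c * d) with hK
  have hS0 : 0 ≤ S := Finset.sum_nonneg fun i _ => abs_nonneg _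
  have hT0 : 0 ≤ T := Finset.sum_nonneg fun i _ => sq_nonneg _
  have hSD : S + c * d ≤ D := by
    have := h1 w
    simp only [← hg, ← hS] at this
    linarith
  have hlhs : (∑ i, g i * Eg i) = K * (T + c * S) := by
    have step : ∀ i, g i * Eg i = K * ((g i) ^ 2 + c * |g i|) := by
      intro i
      rw [hEg i, ← mul_sign_eq_abs (g i)]
      ring
    calc (∑ i, g i * Eg i) = ∑ i, K * ((g i) ^ 2 + c * |g i|) :=
          Finset.sum_congr rfl fun i _ => step i
      _ = K * (T + c * S) := by
          rw [← Finset.mul_sum, Finset.sum_add_distrib, ← Finset.mul_sum]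
  rw [hlhs]
  rcases Nat.eq_zero_or_pos d with hd | hd
  · subst hd
    simp [hT, hS]
  · have hden : 0 < S + c * d := by
      have : (0 : ℝ) < c * d := by positivity
      linarith
    have hD0 : 0 < D := lt_of_lt_of_le hden hSD
    have hK0 : 0 ≤ K := by positivity
    have hKge : (n : ℝ) * r / D ≤ K := by
      apply div_le_div_of_nonneg_left (by positivity) hden hSD
    have h2 : r * ((n : ℝ) / D) * T = ((n : ℝ) * r / D) * T := by ring
    rw [ge_iff_le, h2]
    have : ((n : ℝ) * r / D) * T ≤ K * T := mul_le_mul_of_nonneg_right hKge hT0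
    have h3 : K * T ≤ K * (T + c * S) := by nlinarith [mul_nonneg hK0 (mul_nonneg hc.le hS0)]
    linarith
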